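/- arXiv:2508.07012 — 4 statements merged into one kernel-verified Lean document; each statement's English description precedes it below -/
import Mathlib

section
/- Let G be a group and w a word such that the set of w-values w{G} is finite. Then the derived subgroup w(G)' of the verbal subgroup w(G) is finite. -/
def wordValues {k : ℕ} (w : FreeGroup (Fin k)) (G : Type*) [Group G] : Set G :=
  Set.range fun g : Fin k → G => FreeGroup.lift g w

/-!
Conjugation permutes the finite set `w{G}`, so each `w`-value has finitely many conjugates and
the centralizer of `w{G}`, which is also the centralizer of `w(G)`, has finite index in `G`.
Its trace on `w(G)` is central, so the centre of `w(G)` has finite index. A commutator `⁅a, b⁆`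
only depends on the cosets of `a` and `b` modulo the centre, hence `w(G)` has finitely many
commutators; by Schur's theorem in the form proved in Mathlib (finitely many commutators give a
finite derived subgroup), `w(G)'` is finite.
-/

open Subgroup
open scoped commutatorElement

section Schur

variable {G : Type*} [Group G]

theorem commutatorElement_mul_left_of_mem_center {z : G} (hz : z ∈ center G) (a b : G) :
    ⁅a * z, b⁆ = ⁅a, b⁆ := by
  rw [commutatorElement_def, commutatorElement_def, mul_inv_rev, mul_assoc a z b,
    (mem_center_iff.mp hz b).symm]
  group

theorem commutatorElement_mul_right_of_mem_center {z : G} (hz : z ∈ center G) (a b : G) :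
    ⁅a, b * z⁆ = ⁅a, b⁆ := by
  rw [← commutatorElement_inv, commutatorElement_mul_left_of_mem_center hz, commutatorElement_inv]

theorem finite_commutatorSet_of_finiteIndex_center [(center G).FiniteIndex] :
    Finite (commutatorSet G) := by
  have : Finite (G ⧸ center G) := finite_quotient_of_finiteIndex
  refine Set.Finite.to_subtype <|
    (Set.finite_range fun q : (G ⧸ center G) × (G ⧸ center G) => ⁅q.1.out, q.2.out⁆).subset ?_
  rintro _ ⟨a, b, rfl⟩
  obtain ⟨z, hz⟩ := QuotientGroup.mk_out_eq_mul (center G) a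
  obtain ⟨z', hz'⟩ := QuotientGroup.mk_out_eq_mul (center G) b
  refine ⟨(a, b), ?_⟩
  simp only [hz, hz', commutatorElement_mul_left_of_mem_center z.2,
    commutatorElement_mul_right_of_mem_center z'.2]

theorem finite_commutator_of_finiteIndex_center (H : Subgroup G) [(center H).FiniteIndex] :
    Finite (⁅H, H⁆ : Subgroup G) := by
  have := finite_commutatorSet_of_finiteIndex_center (G := H)
  rw [← map_subtype_commutator]
  exact Finite.of_equiv _ (equivMapOfInjective _ _ H.subtype_injective).toEquiv

end Schur

section Centralizer

variable {G : Type*} [Group G]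

theorem finiteIndex_centralizer_singleton {S : Set G} (hS : S.Finite) {g : G}
    (hconj : ∀ h : G, h * g * h⁻¹ ∈ S) : (centralizer {g}).FiniteIndex := by
  have horbit : MulAction.orbit (ConjAct G) g ⊆ S := by
    rintro _ ⟨h, rfl⟩
    simpa only [ConjAct.smul_def] using hconj (ConjAct.ofConjAct h)
  refine ⟨?_⟩
  rw [centralizer_eq_comap_stabilizer]
  refine ((index_comap_of_surjective _ ConjAct.toConjAct.surjective).trans
    (MulAction.index_stabilizer _ g)).trans_ne ?_
  exact ((Set.ncard_pos (hS.subset horbit)).mpr ⟨g, MulAction.mem_orbit_self g⟩).ne'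

theorem finiteIndex_centralizer_of_conj_mem {S : Set G} (hS : S.Finite)
    (hconj : ∀ g ∈ S, ∀ h : G, h * g * h⁻¹ ∈ S) : (centralizer S).FiniteIndex := by
  have : Finite S := hS.to_subtype
  rw [centralizer_eq_iInf, iInf_subtype']
  exact finiteIndex_iInf fun g => finiteIndex_centralizer_singleton hS (hconj g g.2)

theorem finiteIndex_center_closure {S : Set G} [(centralizer S).FiniteIndex] :
    (center (closure S)).FiniteIndex := by
  refine finiteIndex_of_le (H := (centralizer S).subgroupOf (closure S)) fun x hx => ?_
  rw [mem_subgroupOf, ← centralizer_closure] at hx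
  exact mem_center_iff.mpr fun y => Subtype.ext (hx y y.2)

end Centralizer

theorem map_mem_wordValues {k : ℕ} {G H : Type*} [Group G] [Group H] (f : G →* H)
    {w : FreeGroup (Fin k)} {x : G} (hx : x ∈ wordValues w G) : f x ∈ wordValues w H := by
  obtain ⟨g, rfl⟩ := hx
  exact ⟨f ∘ g, (FreeGroup.lift_unique (f.comp (FreeGroup.lift g)) fun i => by simp).symm⟩

theorem conj_mem_wordValues {k : ℕ} {G : Type*} [Group G] {w : FreeGroup (Fin k)} {x : G}
    (hx : x ∈ wordValues w G) (g : G) : g * x * g⁻¹ ∈ wordValues w G :=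
  map_mem_wordValues (MulAut.conj g).toMonoidHom hx

theorem derived_verbal_finite_of_wordValues_finite {k : ℕ} {G : Type*} [Group G]
    (w : FreeGroup (Fin k)) (hw : (wordValues w G).Finite) :
    Finite (⁅Subgroup.closure (wordValues w G), Subgroup.closure (wordValues w G)⁆ :
      Subgroup G) := by
  have := finiteIndex_centralizer_of_conj_mem hw fun _ hx g => conj_mem_wordValues hx g
  have := finiteIndex_center_closure (S := wordValues w G)
  exact finite_commutator_of_finiteIndex_center _
end

section
/- Let G be a group, A an abelian normal subgroup generated by elements w₁, ..., w_d each of which has finite conjugacy class in G, and suppose [A, G] is central in G. Then [A, G] is finite, with |[A,G]| ≤ |w₁^G| ⋯ |w_d^G|. -/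
/-!
Since `[A, G]` is central, `g ↦ ⁅wᵢ, g⁆` is a homomorphism `G →* G` whose range `Cᵢ` is the
translate `wᵢ · (wᵢ^G)⁻¹` of the conjugacy class of `wᵢ`, and `⁅x * y, g⁆ = ⁅y, g⁆ * ⁅x, g⁆`
for `x, y ∈ A`. Hence `[A, G]` lies in the subgroup generated by the pairwise commuting finite
subgroups `Cᵢ`, which is the image of `C₁ × ⋯ × C_d`.
-/

open scoped commutatorElement

open Subgroup

section

variable {G : Type*} [Group G]

theorem commutatorElement_mul_left_of_commute {x y g : G} (h : Commute x ⁅y, g⁆) :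
    ⁅x * y, g⁆ = ⁅y, g⁆ * ⁅x, g⁆ := by
  rw [commutatorElement_mul_left_eq_conj_mul, h.eq, mul_inv_cancel_right]

theorem commutatorElement_inv_left_of_commute {x g : G} (h : Commute x ⁅x, g⁆) :
    ⁅x⁻¹, g⁆ = ⁅x, g⁆⁻¹ := by
  rw [commutatorElement_inv_left, ← commutatorElement_inv, h.inv_right.inv_left.eq,
    inv_mul_cancel_right]

theorem commutatorElement_mul_right_of_commute {a g h : G} (hc : Commute g ⁅a, h⁆) :
    ⁅a, g * h⁆ = ⁅a, g⁆ * ⁅a, h⁆ := by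
  rw [commutatorElement_mul_right_eq_mul_conj, mul_assoc _ g, hc.eq, mul_assoc,
    mul_inv_cancel_right]

theorem range_commutatorElement_eq_image (a : G) :
    Set.range (fun g => ⁅a, g⁆) =
      (fun x => a * x⁻¹) '' Set.range (fun g : G => g⁻¹ * a * g) := by
  rw [← Set.range_comp, ← (Equiv.inv G).surjective.range_comp]
  congr 1
  ext g
  simp [commutatorElement_def, mul_assoc]

def commutatorHom (a : G) (ha : ∀ g, ⁅a, g⁆ ∈ center G) : G →* G where
  toFun g := ⁅a, g⁆
  map_one' := commutatorElement_one_right a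
  map_mul' g h := commutatorElement_mul_right_of_commute (mem_center_iff.mp (ha h) g)

theorem range_commutatorHom_le_center (a : G) (ha : ∀ g, ⁅a, g⁆ ∈ center G) :
    (commutatorHom a ha).range ≤ center G := by
  rintro _ ⟨g, rfl⟩
  exact ha g

theorem coe_range_commutatorHom (a : G) (ha : ∀ g, ⁅a, g⁆ ∈ center G) :
    ((commutatorHom a ha).range : Set G) =
      (fun x => a * x⁻¹) '' Set.range (fun g : G => g⁻¹ * a * g) :=
  (MonoidHom.coe_range _).trans (range_commutatorElement_eq_image a)

theorem finite_range_commutatorHom (a : G) (ha : ∀ g, ⁅a, g⁆ ∈ center G)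
    (hfc : (Set.range fun g : G => g⁻¹ * a * g).Finite) : Finite (commutatorHom a ha).range := by
  rw [← SetLike.coe_sort_coe, coe_range_commutatorHom]
  exact (hfc.image _).to_subtype

theorem card_range_commutatorHom (a : G) (ha : ∀ g, ⁅a, g⁆ ∈ center G) :
    Nat.card (commutatorHom a ha).range = Nat.card (Set.range fun g : G => g⁻¹ * a * g) := by
  rw [← SetLike.coe_sort_coe, coe_range_commutatorHom]
  exact Nat.card_image_of_injective ((mul_right_injective a).comp inv_injective) _

theorem commutator_closure_top_le {S : Set G} {K : Subgroup G}
    (hc : ⁅closure S, ⊤⁆ ≤ center G) (hK : ∀ s ∈ S, ∀ g, ⁅s, g⁆ ∈ K) :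
    ⁅closure S, ⊤⁆ ≤ K := by
  have hcomm : ∀ x ∈ closure S, ∀ g y : G, Commute y ⁅x, g⁆ := fun x hx g y =>
    mem_center_iff.mp (hc (commutator_mem_commutator hx (mem_top g))) y
  rw [commutator_le]
  intro a ha g _
  induction ha using closure_induction with
  | mem s hs => exact hK s hs g
  | one => simpa only [commutatorElement_one_left] using K.one_mem
  | mul x y _ hy ihx ihy =>
    rw [commutatorElement_mul_left_of_commute (hcomm y hy g x)]
    exact K.mul_mem ihy ihx
  | inv x hx ihx =>
    rw [commutatorElement_inv_left_of_commute (hcomm x hx g x)]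
    exact K.inv_mem ihx

variable {ι : Type*} [Fintype ι] {H : ι → Subgroup G}

theorem finite_iSup_of_commute
    (hcomm : Pairwise fun i j : ι => ∀ x y : G, x ∈ H i → y ∈ H j → Commute x y)
    [∀ i, Finite (H i)] : Finite ↥(⨆ i, H i) := by
  rw [← noncommPiCoprod_range (hcomm := hcomm)]
  exact Finite.of_surjective _ (noncommPiCoprod hcomm).rangeRestrict_surjective

theorem card_iSup_le_prod_card_of_commute
    (hcomm : Pairwise fun i j : ι => ∀ x y : G, x ∈ H i → y ∈ H j → Commute x y)
    [∀ i, Finite (H i)] : Nat.card ↥(⨆ i, H i) ≤ ∏ i, Nat.card (H i) := by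
  rw [← noncommPiCoprod_range (hcomm := hcomm), ← Nat.card_pi]
  exact Nat.card_le_card_of_surjective _ (noncommPiCoprod hcomm).rangeRestrict_surjective

end

theorem commutator_finite_of_fc_generators_general {G : Type*} [Group G] {d : ℕ} (w : Fin d → G)
    (A : Subgroup G) (hgen : A = Subgroup.closure (Set.range w))
    (hc : ⁅A, (⊤ : Subgroup G)⁆ ≤ Subgroup.center G)
    (hfc : ∀ i, (Set.range fun g : G => g⁻¹ * w i * g).Finite) :
    Finite (⁅A, (⊤ : Subgroup G)⁆ : Subgroup G) ∧
      Nat.card (⁅A, (⊤ : Subgroup G)⁆ : Subgroup G) ≤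
        ∏ i, Nat.card (Set.range fun g : G => g⁻¹ * w i * g) := by
  subst hgen
  have hcen (i : Fin d) (g : G) : ⁅w i, g⁆ ∈ center G :=
    hc (commutator_mem_commutator (subset_closure (Set.mem_range_self i)) (mem_top g))
  set C := fun i => (commutatorHom (w i) (hcen i)).range
  have (i : Fin d) : Finite (C i) := finite_range_commutatorHom _ _ (hfc i)
  have hcomm : Pairwise fun i j => ∀ x y : G, x ∈ C i → y ∈ C j → Commute x y :=
    fun i _ _ x y hx _ => (mem_center_iff.mp (range_commutatorHom_le_center _ _ hx) y).symm
  have := finite_iSup_of_commute hcomm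
  have hle : ⁅closure (Set.range w), ⊤⁆ ≤ ⨆ i, C i := by
    refine commutator_closure_top_le hc ?_
    rintro _ ⟨i, rfl⟩ g
    exact mem_iSup_of_mem i ⟨g, rfl⟩
  refine ⟨Finite.of_injective _ (inclusion_injective hle), ?_⟩
  calc Nat.card ↥⁅closure (Set.range w), (⊤ : Subgroup G)⁆
      _ ≤ Nat.card ↥(⨆ i, C i) := card_le_of_le hle
      _ ≤ ∏ i, Nat.card (C i) := card_iSup_le_prod_card_of_commute hcomm
      _ = _ := Finset.prod_congr rfl fun i _ => card_range_commutatorHom _ _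

theorem commutator_finite_of_fc_generators {G : Type*} [Group G] {d : ℕ} (w : Fin d → G)
    (A : Subgroup G) [A.Normal] (hgen : A = Subgroup.closure (Set.range w))
    (hab : ∀ a ∈ A, ∀ b ∈ A, a * b = b * a)
    (hc : ⁅A, (⊤ : Subgroup G)⁆ ≤ Subgroup.center G)
    (hfc : ∀ i, (Set.range fun g : G => g⁻¹ * w i * g).Finite) :
    Finite (⁅A, (⊤ : Subgroup G)⁆ : Subgroup G) ∧
      Nat.card (⁅A, (⊤ : Subgroup G)⁆ : Subgroup G) ≤
        ∏ i, Nat.card (Set.range fun g : G => g⁻¹ * w i * g) :=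
  commutator_finite_of_fc_generators_general w A hgen hc hfc
end

section
/- Let G be a group and w a word such that the set of w-values w{G} is finite. Then for any m ≥ 1, the iterated commutator subgroup [w(G), G, ⁽ᵐ⁾..., G] is finite if and only if [w(G), G] is finite. -/
/-- Iterated commutator: `iterComm H 0 = H`, `iterComm H (n+1) = ⁅iterComm H n, G⁆`. -/
def iterComm {G : Type*} [Group G] (H : Subgroup G) : ℕ → Subgroup G
  | 0 => H
  | n + 1 => ⁅iterComm H n, (⊤ : Subgroup G)⁆

/-!
Let `A` be a finite conjugation-invariant set, such as the set of word values, and write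
`W n = iterComm (closure A) n`. Each `W (n + 1)` is generated by the commutators `⁅x, g⁆` with `x`
running over a generating set of `W n`, which again is finite and conjugation-invariant. Modulo
`W (n + 2)` these generators of `W (n + 1)` are central, and each has finite order: since the
conjugacy class of `x` is finite, some power `g ^ j` with `j > 0` centralises `x`, and then
`⁅x, g⁆ ^ j ≡ ⁅x, g ^ j⁆ = 1`. Hence `W (n + 1) / W (n + 2)` is a finitely generated abelian torsion
group, so finite, and finiteness of `W (n + 2)` passes to `W (n + 1)`.
-/

open Subgroup
open scoped commutatorElement

section

variable {G : Type*} [Group G]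

def IsConjInvariant (A : Set G) : Prop :=
  ∀ g : G, ∀ a ∈ A, g * a * g⁻¹ ∈ A

def commutatorsWith (A : Set G) : Set G :=
  {x | ∃ a ∈ A, ∃ g : G, ⁅a, g⁆ = x}

theorem IsConjInvariant.commutatorsWith {A : Set G} (hA : IsConjInvariant A) :
    IsConjInvariant (commutatorsWith A) := by
  rintro g _ ⟨a, ha, h, rfl⟩
  exact ⟨g * a * g⁻¹, hA g a ha, g * h * g⁻¹, (conjugate_commutatorElement a h g).symm⟩

theorem Set.Finite.commutatorsWith {A : Set G} (hfin : A.Finite) (hA : IsConjInvariant A) :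
    (commutatorsWith A).Finite := by
  refine (hfin.mul hfin.inv).subset ?_
  rintro _ ⟨a, ha, g, rfl⟩
  have h : ⁅a, g⁆ = a * (g * a * g⁻¹)⁻¹ := by group
  exact h ▸ Set.mul_mem_mul ha (Set.inv_mem_inv.mpr (hA g a ha))

theorem IsConjInvariant.closure_normal {A : Set G} (hA : IsConjInvariant A) :
    (closure A).Normal := by
  have h : Group.conjugatesOfSet A = A := by
    refine Set.Subset.antisymm (fun x hx => ?_) Group.subset_conjugatesOfSet
    obtain ⟨a, ha, c, rfl⟩ := by simpa only [Group.mem_conjugatesOfSet_iff, isConj_iff] using hx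
    exact hA c a ha
  rw [← h]
  exact normalClosure_normal

theorem commutator_top_le_iff_le_upperCentralSeriesStep {H N : Subgroup G} [N.Normal] :
    ⁅H, ⊤⁆ ≤ N ↔ H ≤ N.upperCentralSeriesStep :=
  ⟨fun h x hx y => commutator_le.mp h x hx y (mem_top y),
    fun h => commutator_le.mpr fun _ hx y _ => h hx y⟩

theorem commutator_closure_top_eq {A : Set G} (hA : IsConjInvariant A) :
    ⁅closure A, ⊤⁆ = closure (commutatorsWith A) := by
  have := hA.commutatorsWith.closure_normal
  refine le_antisymm ?_ (closure_le _ |>.mpr ?_)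
  · rw [commutator_top_le_iff_le_upperCentralSeriesStep, closure_le]
    exact fun a ha g => subset_closure ⟨a, ha, g, rfl⟩
  · rintro _ ⟨a, ha, g, rfl⟩
    exact commutator_mem_commutator (subset_closure ha) (mem_top g)

theorem IsConjInvariant.exists_pow_commute {A : Set G} (hA : IsConjInvariant A)
    (hfin : A.Finite) {a : G} (ha : a ∈ A) (g : G) : ∃ n, 0 < n ∧ Commute a (g ^ n) := by
  have horbit : MulAction.orbit (ConjAct G) a ⊆ A := by
    rintro _ ⟨c, rfl⟩
    exact hA _ a ha
  have hindex : (MulAction.stabilizer (ConjAct G) a).index ≠ 0 := by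
    rw [MulAction.index_stabilizer]
    exact (Set.ncard_pos (hfin.subset horbit)).mpr ⟨a, MulAction.mem_orbit_self a⟩ |>.ne'
  obtain ⟨n, hn, -, hmem⟩ := exists_pow_mem_of_index_ne_zero hindex (ConjAct.toConjAct g)
  refine ⟨n, hn, ?_⟩
  rw [MulAction.mem_stabilizer_iff, ConjAct.smul_def, ← map_pow, ConjAct.ofConjAct_toConjAct] at hmem
  exact (mul_inv_eq_iff_eq_mul.mp hmem).symm

theorem commutatorElement_pow_right {a b : G} (h : Commute ⁅a, b⁆ b) (n : ℕ) :
    ⁅a, b ^ n⁆ = ⁅a, b⁆ ^ n := by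
  have hconj : a * b * a⁻¹ = ⁅a, b⁆ * b := by group
  calc ⁅a, b ^ n⁆ = (a * b * a⁻¹) ^ n * (b ^ n)⁻¹ := by rw [conj_pow]; group
    _ = ⁅a, b⁆ ^ n := by rw [hconj, h.mul_pow, mul_inv_cancel_right]

open scoped IsMulCommutative in
theorem finite_closure_of_commute_of_isOfFinOrder {T : Set G} (hfin : T.Finite)
    (hcomm : ∀ x ∈ T, ∀ y ∈ T, x * y = y * x) (htor : ∀ x ∈ T, IsOfFinOrder x) :
    Finite (closure T) := by
  have := isMulCommutative_closure hcomm
  have := hfin.to_subtype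
  have : Group.FG (closure T) := Group.closure_finite_fg T
  refine CommGroup.finite_of_fg_isMulTorsion _ (CommGroup.torsion_eq_top_iff.mp ?_)
  rw [eq_top_iff, ← closure_closure_coe_preimage, closure_le]
  exact fun x hx => Submonoid.isOfFinOrder_coe.mp (htor x hx)

theorem Subgroup.finite_of_finite_ker_of_finite_map {G' : Type*} [Group G'] {f : G →* G'}
    {H : Subgroup G} (hker : Finite f.ker) (hmap : Finite (H.map f)) : Finite H := by
  rw [(f.domRestrict H).finite_iff_finite_ker_range, MonoidHom.ker_domRestrict,
    MonoidHom.domRestrict_range]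
  refine ⟨Finite.of_injective (fun x => (⟨x.1, x.2⟩ : f.ker)) fun x y h => ?_, hmap⟩
  exact Subtype.ext (Subtype.ext (congrArg (fun z : f.ker => (z : G)) h))

theorem finite_iterComm_one_of_finite_iterComm_two {A : Set G} (hfin : A.Finite)
    (hA : IsConjInvariant A) (h : Finite (iterComm (closure A) 2)) :
    Finite (iterComm (closure A) 1) := by
  simp only [iterComm, commutator_closure_top_eq hA] at h ⊢
  set C := commutatorsWith A
  set N : Subgroup G := ⁅closure C, (⊤ : Subgroup G)⁆
  have := hA.commutatorsWith.closure_normal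
  let π := QuotientGroup.mk' N
  have hcentral : closure C ≤ (center (G ⧸ N)).comap π := by
    rw [← Subgroup.upperCentralSeriesStep_eq_comap_center,
      ← commutator_top_le_iff_le_upperCentralSeriesStep]
  have htorsion : ∀ x ∈ C, IsOfFinOrder (π x) := by
    rintro _ ⟨a, ha, g, rfl⟩
    obtain ⟨n, hn, hcomm⟩ := hA.exists_pow_commute hfin ha g
    have hcen := mem_comap.mp (hcentral (subset_closure ⟨a, ha, g, rfl⟩))
    rw [map_commutatorElement] at hcen ⊢
    refine isOfFinOrder_iff_pow_eq_one.mpr ⟨n, hn, ?_⟩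
    rw [← commutatorElement_pow_right (mem_center_iff.mp hcen (π g)).symm, ← map_pow,
      ← map_commutatorElement, commutatorElement_eq_one_iff_commute.mpr hcomm, map_one]
  have hmap : Finite ((closure C).map π) := by
    rw [MonoidHom.map_closure]
    refine finite_closure_of_commute_of_isOfFinOrder ((hfin.commutatorsWith hA).image π) ?_ ?_
    · rintro _ - _ ⟨y, hy, rfl⟩
      exact mem_center_iff.mp (hcentral (subset_closure hy)) _
    · rintro _ ⟨x, hx, rfl⟩
      exact htorsion x hx
  refine Subgroup.finite_of_finite_ker_of_finite_map ?_ hmap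
  rwa [QuotientGroup.ker_mk']

theorem wordValues_isConjInvariant {k : ℕ} (w : FreeGroup (Fin k)) :
    IsConjInvariant (wordValues w G) := by
  rintro g _ ⟨f, rfl⟩
  refine ⟨fun i => g * f i * g⁻¹, ?_⟩
  have h : FreeGroup.lift (fun i => g * f i * g⁻¹)
      = (MulAut.conj g).toMonoidHom.comp (FreeGroup.lift f) := by
    ext i
    simp
  simp [h]

theorem iterComm_normal (H : Subgroup G) [H.Normal] : ∀ n, (iterComm H n).Normal
  | 0 => ‹_›
  | n + 1 => have := iterComm_normal H n; commutator_normal _ _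

theorem iterComm_antitone (H : Subgroup G) [H.Normal] : Antitone (iterComm H) :=
  antitone_nat_of_succ_le fun n => have := iterComm_normal H n; commutator_le_left _ _

theorem exists_finite_isConjInvariant_iterComm_eq_closure {A : Set G} (hfin : A.Finite)
    (hA : IsConjInvariant A) :
    ∀ n, ∃ X : Set G, X.Finite ∧ IsConjInvariant X ∧ iterComm (closure A) n = closure X
  | 0 => ⟨A, hfin, hA, rfl⟩
  | n + 1 => by
    obtain ⟨X, hXfin, hX, hn⟩ := exists_finite_isConjInvariant_iterComm_eq_closure hfin hA n
    exact ⟨commutatorsWith X, hXfin.commutatorsWith hX, hX.commutatorsWith,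
      by rw [iterComm, hn, commutator_closure_top_eq hX]⟩

theorem finite_iterComm_of_finite_iterComm_succ {A : Set G} (hfin : A.Finite)
    (hA : IsConjInvariant A) (n : ℕ) (h : Finite (iterComm (closure A) (n + 2))) :
    Finite (iterComm (closure A) (n + 1)) := by
  obtain ⟨X, hXfin, hX, hn⟩ := exists_finite_isConjInvariant_iterComm_eq_closure hfin hA n
  simp only [iterComm, hn] at h ⊢
  exact finite_iterComm_one_of_finite_iterComm_two hXfin hX h

theorem finite_iterComm_one_of_finite {A : Set G} (hfin : A.Finite) (hA : IsConjInvariant A)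
    (n : ℕ) (h : Finite (iterComm (closure A) (n + 1))) : Finite (iterComm (closure A) 1) := by
  induction n with
  | zero => exact h
  | succ n ih => exact ih (finite_iterComm_of_finite_iterComm_succ hfin hA n h)

end

theorem iterComm_finite_iff {k : ℕ} {G : Type*} [Group G]
    (w : FreeGroup (Fin k)) (hw : (wordValues w G).Finite) (m : ℕ) (hm : 1 ≤ m) :
    Finite (iterComm (Subgroup.closure (wordValues w G)) m) ↔
      Finite (⁅Subgroup.closure (wordValues w G), (⊤ : Subgroup G)⁆ : Subgroup G) := by
  have hA := wordValues_isConjInvariant (G := G) w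
  have := hA.closure_normal
  obtain ⟨n, rfl⟩ : ∃ n, m = n + 1 := ⟨m - 1, by omega⟩
  refine ⟨finite_iterComm_one_of_finite hw hA n, fun h => ?_⟩
  have : Finite (iterComm (closure (wordValues w G)) 1) := h
  have hle := iterComm_antitone (closure (wordValues w G)) hm
  exact Finite.of_injective (inclusion hle) (inclusion_injective hle)
end

section
/- Let G be a group, H ≤ G with [H, G] ≤ Z(G) and H abelian, generated by w₁,...,w_d. Then [H, G] is an abelian group and the map φ : G^d → [H,G] given by φ(g₁,...,g_d) = [w₁,g₁]⋯[w_d,g_d] is surjective. -/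
/-- The commutator `[a,g] = a⁻¹g⁻¹ag` (paper's convention). -/
def pcomm {G : Type*} [Group G] (a g : G) : G := a⁻¹ * g⁻¹ * a * g

/-!
When the commutators `[a, g]` with `a ∈ H` are central, they are multiplicative in each argument.
So each `g ↦ [wᵢ, g]` is a homomorphism with central image, `φ` is the product of these pairwise
commuting homomorphisms, and its image is the join of their images. That join contains every
`[wᵢ, g]`, hence by multiplicativity in the first argument every `[a, g]` with `a ∈ H`, and
therefore all of `[H, G]`.
-/

open scoped commutatorElement

open Subgroup

section

variable {G : Type*} [Group G]

theorem pcomm_eq_commutatorElement (a g : G) : pcomm a g = ⁅a⁻¹, g⁻¹⁆ := by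
  simp only [pcomm, commutatorElement_def]
  group

theorem pcomm_mul_right {a g₁ : G} (h : pcomm a g₁ ∈ center G) (g₂ : G) :
    pcomm a (g₁ * g₂) = pcomm a g₁ * pcomm a g₂ := by
  have key := mem_center_iff.mp h (a⁻¹ * g₂⁻¹ * a)
  simp only [pcomm] at key ⊢
  calc a⁻¹ * (g₁ * g₂)⁻¹ * a * (g₁ * g₂)
      = a⁻¹ * g₂⁻¹ * a * (a⁻¹ * g₁⁻¹ * a * g₁) * g₂ := by group
    _ = a⁻¹ * g₁⁻¹ * a * g₁ * (a⁻¹ * g₂⁻¹ * a) * g₂ := by rw [key]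
    _ = a⁻¹ * g₁⁻¹ * a * g₁ * (a⁻¹ * g₂⁻¹ * a * g₂) := by group

theorem pcomm_mul_left {a g : G} (h : pcomm a g ∈ center G) (b : G) :
    pcomm (a * b) g = pcomm a g * pcomm b g := by
  have key := mem_center_iff.mp h b⁻¹
  simp only [pcomm] at key ⊢
  calc (a * b)⁻¹ * g⁻¹ * (a * b) * g
      = b⁻¹ * (a⁻¹ * g⁻¹ * a * g) * (g⁻¹ * b * g) := by group
    _ = a⁻¹ * g⁻¹ * a * g * b⁻¹ * (g⁻¹ * b * g) := by rw [key]
    _ = a⁻¹ * g⁻¹ * a * g * (b⁻¹ * g⁻¹ * b * g) := by group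

theorem pcomm_inv_left {a g : G} (h : pcomm a g ∈ center G) : pcomm a⁻¹ g = (pcomm a g)⁻¹ := by
  refine eq_inv_of_mul_eq_one_right ?_
  rw [← pcomm_mul_left h, mul_inv_cancel]
  simp [pcomm]

theorem pcomm_mem_center {H : Subgroup G} (hc : ⁅H, (⊤ : Subgroup G)⁆ ≤ center G) {a : G}
    (ha : a ∈ H) (g : G) : pcomm a g ∈ center G :=
  hc (pcomm_eq_commutatorElement a g ▸ commutator_mem_commutator (H.inv_mem ha) (mem_top _))

theorem commutator_top_le_of_pcomm_mem {H K : Subgroup G} (h : ∀ a ∈ H, ∀ g, pcomm a g ∈ K) :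
    ⁅H, (⊤ : Subgroup G)⁆ ≤ K := by
  rw [commutator_le]
  intro a ha g _
  simpa [pcomm_eq_commutatorElement] using h a⁻¹ (H.inv_mem ha) g⁻¹

def pcommHom (a : G) (ha : ∀ g, pcomm a g ∈ center G) : G →* G where
  toFun := pcomm a
  map_one' := by simp [pcomm]
  map_mul' g₁ g₂ := pcomm_mul_right (ha g₁) g₂

variable {d : ℕ} (w : Fin d → G) (hw : ∀ i g, pcomm (w i) g ∈ center G)

/-- The paper's `φ`. -/
def pcommProd : (Fin d → G) →* G :=
  MonoidHom.noncommPiCoprod (fun i => pcommHom (w i) (hw i))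
    fun _ j _ _ y => mem_center_iff.mp (hw j y) _

theorem pcommProd_apply (g : Fin d → G) :
    pcommProd w hw g = (List.ofFn fun i => pcomm (w i) (g i)).prod := by
  simp [pcommProd, MonoidHom.noncommPiCoprod, Finset.noncommProd, pcommHom]

theorem range_pcommProd : (pcommProd w hw).range = ⨆ i, (pcommHom (w i) (hw i)).range :=
  MonoidHom.noncommPiCoprod_range _

theorem pcomm_mem_range_pcommProd (hc : ⁅closure (Set.range w), (⊤ : Subgroup G)⁆ ≤ center G)
    {a : G} (ha : a ∈ closure (Set.range w)) (g : G) : pcomm a g ∈ (pcommProd w hw).range := by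
  rw [range_pcommProd]
  induction ha using closure_induction with
  | mem x hx =>
    obtain ⟨i, rfl⟩ := hx
    exact mem_iSup_of_mem i ⟨g, rfl⟩
  | one => simp [pcomm]
  | mul x y hx _ ihx ihy =>
    rw [pcomm_mul_left (pcomm_mem_center hc hx g)]
    exact mul_mem ihx ihy
  | inv x hx ihx =>
    rw [pcomm_inv_left (pcomm_mem_center hc hx g)]
    exact inv_mem ihx

end

theorem commutator_abelian_and_surjective_general {G : Type*} [Group G] {d : ℕ}
    (w : Fin d → G) (H : Subgroup G) (hgen : H = Subgroup.closure (Set.range w))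
    (hc : ⁅H, (⊤ : Subgroup G)⁆ ≤ Subgroup.center G) :
    (∀ a ∈ ⁅H, (⊤ : Subgroup G)⁆, ∀ b ∈ ⁅H, (⊤ : Subgroup G)⁆, a * b = b * a) ∧
    (∀ x ∈ ⁅H, (⊤ : Subgroup G)⁆,
      ∃ g : Fin d → G, x = (List.ofFn fun i => pcomm (w i) (g i)).prod) := by
  subst hgen
  have hw : ∀ i g, pcomm (w i) g ∈ center G :=
    fun i => pcomm_mem_center hc (subset_closure ⟨i, rfl⟩)
  refine ⟨fun a ha b _ => (mem_center_iff.mp (hc ha) b).symm, fun x hx => ?_⟩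
  obtain ⟨g, rfl⟩ :=
    commutator_top_le_of_pcomm_mem (fun a ha g => pcomm_mem_range_pcommProd w hw hc ha g) hx
  exact ⟨g, pcommProd_apply w hw g⟩

theorem commutator_abelian_and_surjective {G : Type*} [Group G] {d : ℕ}
    (w : Fin d → G) (H : Subgroup G) (hgen : H = Subgroup.closure (Set.range w))
    (hab : ∀ a ∈ H, ∀ b ∈ H, a * b = b * a)
    (hc : ⁅H, (⊤ : Subgroup G)⁆ ≤ Subgroup.center G) :
    (∀ a ∈ ⁅H, (⊤ : Subgroup G)⁆, ∀ b ∈ ⁅H, (⊤ : Subgroup G)⁆, a * b = b * a) ∧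
    (∀ x ∈ ⁅H, (⊤ : Subgroup G)⁆,
      ∃ g : Fin d → G, x = (List.ofFn fun i => pcomm (w i) (g i)).prod) :=
  commutator_abelian_and_surjective_general w H hgen hc
end
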